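/- Let Ω ⊆ ℝⁿ be open, let u : ℝⁿ → ℝ be a C¹ function whose (compact) support is contained in Ω, and let w be a C² real-valued function on Ω. Then ∫_Ω |∇u|² dx ≥ ∫_Ω (Δw − |∇w|²) u² dx. -/

import Mathlib

open MeasureTheory Real

/-- The `i`-th partial derivative of a function on `ℝⁿ`. -/
noncomputable def pd (n : ℕ) (f : EuclideanSpace ℝ (Fin n) → ℝ)
    (i : Fin n) (x : EuclideanSpace ℝ (Fin n)) : ℝ :=
  fderiv ℝ f x (EuclideanSpace.single i 1)

/-- The squared Euclidean norm of the gradient, `|∇f|² = Σᵢ (∂ᵢf)²`. -/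
noncomputable def gradSq (n : ℕ) (f : EuclideanSpace ℝ (Fin n) → ℝ)
    (x : EuclideanSpace ℝ (Fin n)) : ℝ :=
  ∑ i, (pd n f i x) ^ 2

/-- The Euclidean Laplacian, `Δf = Σᵢ ∂ᵢ²f`. -/
noncomputable def lap (n : ℕ) (f : EuclideanSpace ℝ (Fin n) → ℝ)
    (x : EuclideanSpace ℝ (Fin n)) : ℝ :=
  ∑ i, pd n (pd n f i) i x

open Filter Topology Manifold

/-!
Multiplying `w` by a smooth cutoff equal to `1` near `tsupport u` and to `0` near `Ωᶜ` gives a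
global `C²` function that agrees with `w` near the support of `u`, so we may assume `w ∈ C²(ℝⁿ)`.
Completing the square then gives the pointwise identity
`|∇u|² - (Δw - |∇w|²) u² = Σᵢ (∂ᵢu + u ∂ᵢw)² - div (u² ∇w)`,
and the divergence of the compactly supported `C¹` field `u² ∇w` integrates to zero.
-/

section General

variable {E F : Type*} [NormedAddCommGroup E] [NormedSpace ℝ E] [FiniteDimensional ℝ E]
  [NormedAddCommGroup F] [NormedSpace ℝ F]

theorem ContDiffOn.exists_contDiff_eventuallyEq_nhdsSet {k : ℕ∞} {f : E → F}
    {Ω s : Set E} (hf : ContDiffOn ℝ k f Ω) (hΩ : IsOpen Ω) (hs : IsClosed s) (hsΩ : s ⊆ Ω) :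
    ∃ g : E → F, ContDiff ℝ k g ∧ g =ᶠ[𝓝ˢ s] f := by
  obtain ⟨χ, hχ0, hχ1, -⟩ := exists_contMDiffMap_zero_one_nhds_of_isClosed 𝓘(ℝ, E) (n := k)
    hΩ.isClosed_compl hs (Set.disjoint_compl_left_iff_subset.2 hsΩ)
  have hχ : ContDiff ℝ k χ := contMDiff_iff_contDiff.1 χ.contMDiff
  refine ⟨fun x => χ x • f x, contDiff_iff_contDiffAt.2 fun x => ?_, ?_⟩
  · by_cases hx : x ∈ Ω
    · exact hχ.contDiffAt.smul (hf.contDiffAt (hΩ.mem_nhds hx))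
    · refine (contDiffAt_const (c := (0 : F))).congr_of_eventuallyEq ?_
      filter_upwards [hχ0.filter_mono (nhds_le_nhdsSet hx)] with y hy
      simp [hy]
  · filter_upwards [hχ1] with y hy
    simp [hy]

theorem integral_fderiv_apply_eq_zero [MeasurableSpace E] [BorelSpace E] (μ : Measure E)
    [μ.IsAddHaarMeasure] {f : E → ℝ} (hf : ContDiff ℝ 1 f) (hc : HasCompactSupport f) (v : E) :
    ∫ x, fderiv ℝ f x v ∂μ = 0 := by
  have hf' : Continuous fun x => fderiv ℝ f x v :=
    (hf.continuous_fderiv one_ne_zero).clm_apply continuous_const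
  have h := integral_mul_fderiv_eq_neg_fderiv_mul_of_integrable (μ := μ) (g := fun _ => (1 : ℝ))
    (v := v) (by simpa using hf'.integrable_of_hasCompactSupport (hc.fderiv_apply ℝ v))
    (by simp) (by simpa using hf.continuous.integrable_of_hasCompactSupport hc)
    (fun x _ => hf.differentiable one_ne_zero x) (fun x _ => differentiableAt_const _)
  simpa using h.symm

end General

section Euclidean

variable {n : ℕ} {f g : EuclideanSpace ℝ (Fin n) → ℝ} {x : EuclideanSpace ℝ (Fin n)} (i : Fin n)

theorem ContDiff.pd {k : WithTop ℕ∞} (hf : ContDiff ℝ (k + 1) f) : ContDiff ℝ k (pd n f i) :=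
  (hf.fderiv_right le_rfl).clm_apply contDiff_const

theorem pd_eq_zero_of_notMem_tsupport (hx : x ∉ tsupport f) : pd n f i x = 0 := by
  simp [pd, fderiv_of_notMem_tsupport ℝ hx]

theorem gradSq_eq_zero_of_notMem_tsupport (hx : x ∉ tsupport f) : gradSq n f x = 0 := by
  simp [gradSq, pd_eq_zero_of_notMem_tsupport _ hx]

theorem HasCompactSupport.pd (hf : HasCompactSupport f) : HasCompactSupport (pd n f i) :=
  hf.fderiv_apply ℝ _

theorem pd_mul (hf : DifferentiableAt ℝ f x) (hg : DifferentiableAt ℝ g x) :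
    pd n (fun y => f y * g y) i x = pd n f i x * g x + f x * pd n g i x := by
  simp only [pd, fderiv_fun_mul hf hg, add_apply, smul_apply, smul_eq_mul]
  ring

theorem Filter.EventuallyEq.pd (h : f =ᶠ[𝓝 x] g) : pd n f i =ᶠ[𝓝 x] pd n g i :=
  (h.fderiv (𝕜 := ℝ)).mono fun y hy => by simp only [_root_.pd, hy]

theorem Filter.EventuallyEq.gradSq_eq (h : f =ᶠ[𝓝 x] g) : gradSq n f x = gradSq n g x :=
  Finset.sum_congr rfl fun i _ => by rw [(h.pd i).eq_of_nhds]

theorem Filter.EventuallyEq.lap_eq (h : f =ᶠ[𝓝 x] g) : lap n f x = lap n g x :=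
  Finset.sum_congr rfl fun i _ => (h.pd i).pd i |>.eq_of_nhds

theorem integral_pd_eq_zero (hf : ContDiff ℝ 1 f) (hc : HasCompactSupport f) :
    ∫ x, pd n f i x = 0 :=
  integral_fderiv_apply_eq_zero volume hf hc _

theorem pd_sq_mul {u v : EuclideanSpace ℝ (Fin n) → ℝ} (hu : DifferentiableAt ℝ u x)
    (hv : DifferentiableAt ℝ v x) :
    pd n (fun y => u y ^ 2 * v y) i x = 2 * u x * pd n u i x * v x + u x ^ 2 * pd n v i x := by
  simp only [sq]
  rw [pd_mul (f := fun y => u y * u y) i (hu.mul hu) hv, pd_mul i hu hu]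
  ring

theorem lap_sub_gradSq_mul_sq {u w : EuclideanSpace ℝ (Fin n) → ℝ}
    (hu : DifferentiableAt ℝ u x) (hw : ∀ i, DifferentiableAt ℝ (pd n w i) x) :
    (lap n w x - gradSq n w x) * u x ^ 2 = gradSq n u x
      - ∑ i, (pd n u i x + u x * pd n w i x) ^ 2
      + ∑ i, pd n (fun y => u y ^ 2 * pd n w i y) i x := by
  simp only [lap, gradSq, pd_sq_mul _ hu (hw _), Finset.sum_mul, ← Finset.sum_sub_distrib,
    ← Finset.sum_add_distrib]
  exact Finset.sum_congr rfl fun i _ => by ring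

theorem integral_lap_sub_gradSq_mul_sq_le {u w : EuclideanSpace ℝ (Fin n) → ℝ}
    (hu : ContDiff ℝ 1 u) (hc : HasCompactSupport u) (hw : ContDiff ℝ 2 w) :
    ∫ x, (lap n w x - gradSq n w x) * u x ^ 2 ≤ ∫ x, gradSq n u x := by
  have hpu : ∀ i, Continuous (pd n u i) := fun i => (hu.pd (k := 0) i).continuous
  have hpw : ∀ i, ContDiff ℝ 1 (pd n w i) := fun i => hw.pd i
  have hflux : ∀ i, ContDiff ℝ 1 fun y => u y ^ 2 * pd n w i y := fun i => (hu.pow 2).mul (hpw i)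
  have hfluxc : ∀ i, HasCompactSupport fun y => u y ^ 2 * pd n w i y := fun i =>
    .intro hc fun x hx => by simp [image_eq_zero_of_notMem_tsupport hx]
  set S := fun x => ∑ i, (pd n u i x + u x * pd n w i x) ^ 2
  set D := fun x => ∑ i, pd n (fun y => u y ^ 2 * pd n w i y) i x
  have hgrad : Integrable (gradSq n u) :=
    (continuous_finsetSum _ fun i _ => (hpu i).pow 2).integrable_of_hasCompactSupport
      (.intro hc fun x hx => gradSq_eq_zero_of_notMem_tsupport hx)
  have hS : Integrable S :=
    (continuous_finsetSum _ fun i _ =>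
      ((hpu i).add (hu.continuous.mul (hpw i).continuous)).pow 2).integrable_of_hasCompactSupport
      (.intro hc fun x hx => by
        simp [pd_eq_zero_of_notMem_tsupport _ hx, image_eq_zero_of_notMem_tsupport hx])
  have hDi : ∀ i, Integrable fun x => pd n (fun y => u y ^ 2 * pd n w i y) i x := fun i =>
    ((hflux i).pd (k := 0) i).continuous.integrable_of_hasCompactSupport ((hfluxc i).pd i)
  have hS0 : 0 ≤ ∫ x, S x := integral_nonneg fun x => Finset.sum_nonneg fun i _ => sq_nonneg _
  have hD : ∫ x, D x = 0 := by
    simp only [D, integral_finsetSum _ fun i _ => hDi i,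
      integral_pd_eq_zero _ (hflux _) (hfluxc _), Finset.sum_const_zero]
  calc ∫ x, (lap n w x - gradSq n w x) * u x ^ 2
      = ∫ x, (gradSq n u x - S x + D x) :=
        integral_congr_ae (.of_forall fun x =>
          lap_sub_gradSq_mul_sq (hu.differentiable one_ne_zero x)
            fun i => (hpw i).differentiable one_ne_zero x)
    _ = (∫ x, gradSq n u x) - ∫ x, S x := by
        rw [integral_add (f := fun x => gradSq n u x - S x) (hgrad.sub hS)
          (integrable_finsetSum _ fun i _ => hDi i), integral_sub hgrad hS, hD, add_zero]
    _ ≤ ∫ x, gradSq n u x := sub_le_self _ hS0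

end Euclidean

theorem weighted_poincare_basic (n : ℕ) (Ω : Set (EuclideanSpace ℝ (Fin n)))
    (hΩ : IsOpen Ω) (u w : EuclideanSpace ℝ (Fin n) → ℝ)
    (hu : ContDiff ℝ 1 u) (husupp : HasCompactSupport u) (huΩ : tsupport u ⊆ Ω)
    (hw : ContDiffOn ℝ 2 w Ω) :
    ∫ x in Ω, gradSq n u x ≥ ∫ x in Ω, (lap n w x - gradSq n w x) * (u x) ^ 2 := by
  obtain ⟨W, hW, hWw⟩ :=
    hw.exists_contDiff_eventuallyEq_nhdsSet (k := 2) hΩ (isClosed_tsupport u) huΩ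
  have hweight : ∀ x,
      (lap n w x - gradSq n w x) * u x ^ 2 = (lap n W x - gradSq n W x) * u x ^ 2 := by
    intro x
    by_cases hx : x ∈ tsupport u
    · have hxW := (hWw.filter_mono (nhds_le_nhdsSet hx)).symm
      rw [hxW.lap_eq, hxW.gradSq_eq]
    · simp [image_eq_zero_of_notMem_tsupport hx]
  have hout : ∀ x ∉ Ω, x ∉ tsupport u := fun x hx h => hx (huΩ h)
  rw [setIntegral_eq_integral_of_forall_compl_eq_zero
      fun x hx => gradSq_eq_zero_of_notMem_tsupport (hout x hx),
    setIntegral_eq_integral_of_forall_compl_eq_zero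
      fun x hx => by simp [image_eq_zero_of_notMem_tsupport (hout x hx)]]
  simp_rw [hweight]
  exact integral_lap_sub_gradSq_mul_sq_le hu husupp hW
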